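/- arXiv:2107.06678 — 9 statements merged into one kernel-verified Lean document; each statement's English description precedes it below -/
import Mathlib

section
/- In a K-user NOMA cluster where every non-head user's rate is fixed at its minimum demand, the power of each non-head user k < K is an affine increasing function of the total cluster power q: p_k = β_k ∏_{j<k}(1-β_j) · q + c_k, where β_k = (2^(R_k^min/W)-1)/2^(R_k^min/W) ∈ (0,1) and c_k = β_k ( 1/h_k - Σ_{j<k} (β_j/h_j) ∏_{j<l<k}(1-β_l) ). -/
/-!
Let `U k = q - ∑_{j<k} p j` be the power left to users `k, …, K`. As the total power is `q`,
the interference seen by user `k` is `U k - p k`, and the rate constraint solves to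
`p k = β k * (1 / h k + U k)`. Hence `U (k+1) = (1 - β k) * U k - β k / h k` with `U 0 = q`,
and the closed form of this affine recurrence, substituted back, is the claim.
-/

open Finset

open Order in
theorem affine_recurrence_closed_form {α R : Type*} [LinearOrder α] [LocallyFiniteOrder α]
    [OrderBot α] [SuccOrder α] [IsSuccArchimedean α] [CommRing R] (u a b : α → R)
    (hu : ∀ i, ¬IsMax i → u (succ i) = a i * u i + b i) (k : α) :
    u k = (∏ j ∈ Iio k, a j) * u ⊥ + ∑ j ∈ Iio k, b j * ∏ l ∈ Ioo j k, a l := by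
  classical
  induction k using Succ.rec_bot with
  | hbot => simp
  | hsucc i ih =>
    by_cases hi : IsMax i
    · rwa [hi.succ_eq]
    have hsum : ∑ j ∈ Iio i, b j * ∏ l ∈ Ioo j (succ i), a l
        = a i * ∑ j ∈ Iio i, b j * ∏ l ∈ Ioo j i, a l := by
      rw [mul_sum]
      refine sum_congr rfl fun j hj => ?_
      rw [Ioo_succ_right_eq_Ioc_of_not_isMax hi, ← Ioo_insert_right (mem_Iio.mp hj),
        prod_insert right_notMem_Ioo]
      ring
    rw [hu i hi, ih, Iio_succ_eq_Iic_of_not_isMax hi, ← Iio_insert,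
      prod_insert notMem_Iio_self, sum_insert notMem_Iio_self,
      Ioo_succ_right_eq_Ioc_of_not_isMax hi, Ioc_self, prod_empty, hsum]
    ring

theorem Fintype.sum_eq_sum_Iio_add_add_sum_Ioi {α M : Type*} [LinearOrder α] [Fintype α]
    [LocallyFiniteOrderBot α] [LocallyFiniteOrderTop α] [AddCommMonoid M] (f : α → M) (k : α) :
    ∑ i, f i = ∑ i ∈ Iio k, f i + f k + ∑ i ∈ Ioi k, f i := by
  classical
  rw [Fintype.sum_eq_add_sum_compl k, ← Ioi_disjUnion_Iio, sum_disjUnion]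
  abel

theorem nonhead_power_eq_of_rate_eq_min {K : Type*} [Field K] {t h p U : K} (ht : t ≠ 0)
    (hh : h ≠ 0) (H : p * h = (t - 1) * (1 + h * (U - p))) :
    p = (t - 1) / t * (1 / h + U) := by
  field_simp
  linear_combination H

theorem noma_nonhead_power_affine_in_cluster_power_general
    (K : ℕ) (W : ℝ)
    (h : Fin (K + 1) → ℝ) (hpos : ∀ k, 0 < h k)
    (Rmin : Fin (K + 1) → ℝ)
    (β : Fin (K + 1) → ℝ)
    (hβ : ∀ k, β k = ((2 : ℝ) ^ (Rmin k / W) - 1) / (2 : ℝ) ^ (Rmin k / W))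
    (c : Fin (K + 1) → ℝ)
    (hc : ∀ k, c k = β k * (1 / h k -
      ∑ j ∈ univ.filter (fun j => j < k),
        (β j / h j) * ∏ l ∈ univ.filter (fun l => j < l ∧ l < k), (1 - β l)))
    (q : ℝ) (p : Fin (K + 1) → ℝ)
    (hmin : ∀ k, k ≠ Fin.last K →
      p k * h k = ((2 : ℝ) ^ (Rmin k / W) - 1) *
        (1 + h k * ∑ j ∈ univ.filter (fun j => k < j), p j))
    (hhead : p (Fin.last K) = q - ∑ k ∈ univ.filter (fun k => k < Fin.last K), p k) :
    ∀ k, k ≠ Fin.last K →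
      p k = β k * (∏ j ∈ univ.filter (fun j => j < k), (1 - β j)) * q + c k := by
  simp only [filter_gt_eq_Iio, filter_lt_eq_Ioi, filter_lt_lt_eq_Ioo] at hc hmin hhead ⊢
  have htotal : ∑ j, p j = q := by
    rw [Fintype.sum_eq_sum_Iio_add_add_sum_Ioi p (Fin.last K), hhead, ← Fin.top_eq_last, Ioi_top]
    ring
  have hpow : ∀ i ≠ Fin.last K, p i = β i * (1 / h i + (q - ∑ j ∈ Iio i, p j)) := by
    intro i hi
    rw [hβ i]
    refine nonhead_power_eq_of_rate_eq_min (by positivity) (hpos i).ne' ?_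
    rw [hmin i hi, ← htotal, Fintype.sum_eq_sum_Iio_add_add_sum_Ioi p i]
    ring
  have hresidual := affine_recurrence_closed_form (fun i => q - ∑ j ∈ Iio i, p j)
    (fun i => 1 - β i) (fun i => -(β i / h i)) fun i hi => by
      rw [Iio_succ_eq_Iic_of_not_isMax hi, ← Iio_insert, sum_insert notMem_Iio_self,
        hpow i (by rintro rfl; exact hi isMax_top)]
      ring
  intro k hk
  simp only [Iio_bot, sum_empty, sub_zero, neg_mul, sum_neg_distrib] at hresidual
  rw [hpow k hk, hresidual, hc k]
  ring

/-- In a `(K+1)`-user NOMA cluster (head user = the strongest, `Fin.last K`) where every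
non-head user's rate is fixed exactly at its minimum demand and the total power is `q`,
each non-head user's power is the affine function of `q`:
`p k = β k * ∏_{j < k} (1 - β j) * q + c k`, with
`β k = (2^(Rmin k / W) - 1) / 2^(Rmin k / W)` and
`c k = β k * (1 / h k - ∑_{j < k} (β j / h j) * ∏_{j < l < k} (1 - β l))`. -/
theorem noma_nonhead_power_affine_in_cluster_power
    (K : ℕ) (W : ℝ) (hW : 0 < W)
    (h : Fin (K + 1) → ℝ) (hpos : ∀ k, 0 < h k) (hmono : StrictMono h)
    (Rmin : Fin (K + 1) → ℝ) (hR : ∀ k, 0 < Rmin k)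
    (β : Fin (K + 1) → ℝ)
    (hβ : ∀ k, β k = ((2 : ℝ) ^ (Rmin k / W) - 1) / (2 : ℝ) ^ (Rmin k / W))
    (c : Fin (K + 1) → ℝ)
    (hc : ∀ k, c k = β k * (1 / h k -
      ∑ j ∈ univ.filter (fun j => j < k),
        (β j / h j) * ∏ l ∈ univ.filter (fun l => j < l ∧ l < k), (1 - β l)))
    (q : ℝ) (p : Fin (K + 1) → ℝ)
    (hmin : ∀ k, k ≠ Fin.last K →
      p k * h k = ((2 : ℝ) ^ (Rmin k / W) - 1) *
        (1 + h k * ∑ j ∈ univ.filter (fun j => k < j), p j))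
    (hhead : p (Fin.last K) = q - ∑ k ∈ univ.filter (fun k => k < Fin.last K), p k) :
    ∀ k, k ≠ Fin.last K →
      p k = β k * (∏ j ∈ univ.filter (fun j => j < k), (1 - β j)) * q + c k :=
  noma_nonhead_power_affine_in_cluster_power_general K W h hpos Rmin β hβ c hc q p hmin hhead
end

section
/- In a K-user NOMA cluster with fixed total power q, if the non-head users' powers are set by the affine rule p_k = β_k ∏_{j<k}(1-β_j)·q + c_k (meeting their minimum rates exactly) and the head user gets the remainder p_K = αq - c, then the cluster sum-rate equals Σ_{k=1}^{K-1} R_k^min + W·log2(1 + (αq - c)·h_K); i.e., the sum-rate is a strictly concave, strictly increasing function of q on the feasible region where αq - c ≥ 0. -/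
open Finset Real

/- No user lies above the head user, so its rate carries no interference term and equals
`W log₂(1 + p_K h_K)`; every other rate is pinned to its minimum. Since `1 + (α q - c) h_K` is
affine in `q` with positive slope `α h_K`, the head rate is a positive multiple of `log`
composed with an increasing affine map, hence strictly increasing and strictly concave. -/

/-- Achievable rate of user `k` in a NOMA cluster. -/
noncomputable def nomaRate {K : ℕ} (W : ℝ) (h p : Fin K → ℝ) (k : Fin K) : ℝ :=
  W * Real.logb 2
    (1 + p k * h k / (1 + h k * ∑ j ∈ univ.filter (fun j => k < j), p j))

theorem StrictConcaveOn.const_mul {E : Type*} [AddCommMonoid E] [Module ℝ E] {s : Set E}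
    {f : E → ℝ} (hf : StrictConcaveOn ℝ s f) {r : ℝ} (hr : 0 < r) :
    StrictConcaveOn ℝ s fun x => r * f x := by
  refine ⟨hf.1, fun x hx y hy hxy a b ha hb hab => ?_⟩
  have := mul_lt_mul_of_pos_left (hf.2 hx hy hxy ha hb hab) hr
  simp only [smul_eq_mul] at this ⊢
  linarith

theorem StrictConcaveOn.comp_affine {s : Set ℝ} {g : ℝ → ℝ} (hg : StrictConcaveOn ℝ s g)
    {a : ℝ} (ha : a ≠ 0) (b : ℝ) :
    StrictConcaveOn ℝ ((fun x => a * x + b) ⁻¹' s) fun x => g (a * x + b) := by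
  have hcomb : ∀ {x y u v : ℝ}, u + v = 1 →
      a * (u * x + v * y) + b = u * (a * x + b) + v * (a * y + b) := by
    intro x y u v huv
    linear_combination b * huv.symm
  refine ⟨fun x hx y hy u v hu hv huv => ?_, fun x hx y hy hxy u v hu hv huv => ?_⟩
  · simpa only [Set.mem_preimage, smul_eq_mul, hcomb huv] using hg.1 hx hy hu hv huv
  · have hne : a * x + b ≠ a * y + b := fun h => hxy (mul_left_cancel₀ ha (add_right_cancel h))
    simpa only [smul_eq_mul, hcomb huv] using hg.2 hx hy hne hu hv huv

theorem strictConcaveOn_logb_Ioi {B : ℝ} (hB : 1 < B) :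
    StrictConcaveOn ℝ (Set.Ioi 0) (logb B) :=
  (strictConcaveOn_log_Ioi.const_mul (inv_pos.2 (log_pos hB))).congr fun x _ =>
    (div_eq_inv_mul (log x) (log B)).symm

section AffineLogb

variable {W a b B : ℝ}

theorem strictMonoOn_mul_logb_affine (hW : 0 < W) (ha : 0 < a) (hB : 1 < B) :
    StrictMonoOn (fun x => W * logb B (a * x + b)) {x | 0 < a * x + b} :=
  fun _ hx _ hy hxy => mul_lt_mul_of_pos_left
    (strictMonoOn_logb hB hx hy (by gcongr)) hW

theorem strictConcaveOn_mul_logb_affine (hW : 0 < W) (ha : a ≠ 0) (hB : 1 < B) :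
    StrictConcaveOn ℝ {x | 0 < a * x + b} fun x => W * logb B (a * x + b) :=
  ((strictConcaveOn_logb_Ioi hB).comp_affine ha b).const_mul hW

end AffineLogb

theorem nomaRate_last {K : ℕ} (W : ℝ) (h p : Fin (K + 1) → ℝ) :
    nomaRate W h p (Fin.last K) = W * logb 2 (1 + p (Fin.last K) * h (Fin.last K)) := by
  have hnone : univ.filter (fun j : Fin (K + 1) => Fin.last K < j) = ∅ :=
    filter_false_of_mem fun j _ => not_lt.2 (Fin.le_last j)
  simp [nomaRate, hnone]

theorem noma_cluster_sum_rate_closed_form_general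
    (K : ℕ) (W : ℝ) (hW : 0 < W)
    (h : Fin (K + 1) → ℝ) (hpos : ∀ k, 0 < h k)
    (Rmin : Fin (K + 1) → ℝ) (α c q : ℝ) (hα : 0 < α)
    (p : Fin (K + 1) → ℝ)
    (hrate : ∀ k, k ≠ Fin.last K → nomaRate W h p k = Rmin k)
    (hhead : p (Fin.last K) = α * q - c) :
    (∑ k, nomaRate W h p k =
        (∑ k ∈ univ.filter (fun k => k ≠ Fin.last K), Rmin k) +
          W * Real.logb 2 (1 + (α * q - c) * h (Fin.last K))) ∧
    StrictMonoOn (fun q' : ℝ => W * Real.logb 2 (1 + (α * q' - c) * h (Fin.last K)))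
      {q' : ℝ | -1 / h (Fin.last K) < α * q' - c} ∧
    StrictConcaveOn ℝ {q' : ℝ | -1 / h (Fin.last K) < α * q' - c}
      (fun q' : ℝ => W * Real.logb 2 (1 + (α * q' - c) * h (Fin.last K))) := by
  set hK := h (Fin.last K)
  have hKpos : 0 < hK := hpos _
  have hslope : 0 < α * hK := mul_pos hα hKpos
  have hfun : (fun q' => W * logb 2 (1 + (α * q' - c) * hK)) =
      fun q' => W * logb 2 (α * hK * q' + (1 - c * hK)) := by
    funext q'; ring_nf
  have hset : {q' : ℝ | -1 / hK < α * q' - c} = {q' | 0 < α * hK * q' + (1 - c * hK)} := by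
    ext q'
    simp only [Set.mem_ofPred_eq, div_lt_iff₀ hKpos]
    constructor <;> intro _ <;> linarith
  refine ⟨?_, ?_, ?_⟩
  · rw [← sum_erase_add univ _ (mem_univ (Fin.last K)), nomaRate_last, hhead, filter_ne']
    exact congrArg (· + _) (sum_congr rfl fun k hk => hrate k (ne_of_mem_erase hk))
  · rw [hfun, hset]
    exact strictMonoOn_mul_logb_affine hW hslope one_lt_two
  · rw [hfun, hset]
    exact strictConcaveOn_mul_logb_affine hW hslope.ne' one_lt_two

/-- If every non-head user's rate equals its minimum demand and the head user's power is
`α q - c`, the cluster sum-rate equals `∑_{k ≠ head} Rmin k + W log₂(1 + (αq - c) h_K)`;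
moreover `q ↦ W log₂(1 + (αq - c) h_K)` is strictly increasing and strictly concave on
`{q : αq - c > -1 / h_K}`. -/
theorem noma_cluster_sum_rate_closed_form
    (K : ℕ) (W : ℝ) (hW : 0 < W)
    (h : Fin (K + 1) → ℝ) (hpos : ∀ k, 0 < h k) (hmono : StrictMono h)
    (Rmin : Fin (K + 1) → ℝ) (α c q : ℝ) (hα : 0 < α)
    (p : Fin (K + 1) → ℝ)
    (hrate : ∀ k, k ≠ Fin.last K → nomaRate W h p k = Rmin k)
    (hhead : p (Fin.last K) = α * q - c) :
    (∑ k, nomaRate W h p k =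
        (∑ k ∈ univ.filter (fun k => k ≠ Fin.last K), Rmin k) +
          W * Real.logb 2 (1 + (α * q - c) * h (Fin.last K))) ∧
    StrictMonoOn (fun q' : ℝ => W * Real.logb 2 (1 + (α * q' - c) * h (Fin.last K)))
      {q' : ℝ | -1 / h (Fin.last K) < α * q' - c} ∧
    StrictConcaveOn ℝ {q' : ℝ | -1 / h (Fin.last K) < α * q' - c}
      (fun q' : ℝ => W * Real.logb 2 (1 + (α * q' - c) * h (Fin.last K))) :=
  noma_cluster_sum_rate_closed_form_general K W hW h hpos Rmin α c q hα p hrate hhead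
end

section
/- The sum-rate function of a K-user Gaussian NOMA cluster, F(p) = Σ_{k=1}^{K} log(1 + p_k h_k / (1 + h_k Σ_{j>k} p_j)) with 0 < h_1 < ... < h_K, simplifies via telescoping to F(p) = Σ_{k=1}^{K} [ log(1 + h_k Σ_{j≥k} p_j) - log(1 + h_k Σ_{j>k} p_j) ], and F is concave in p on the nonnegative orthant. -/
/-!
Write `T k = ∑_{j ≥ k} p j`. Since `1 + h_k T_{k+1} + p_k h_k = 1 + h_k T_k`, the rate of user `k`
is `log (1 + h_k T_k) - log (1 + h_k T_{k+1})`. Regrouping the subtracted terms by tail sum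
(`T_K = 0`) gives `F p = ∑_k [log (1 + h_k T_k) - log (1 + h_{k-1} T_k)]` with `h_{-1} = 0`.
Each summand is `x ↦ log (1 + a x) - log (1 + b x)` with `0 ≤ b ≤ a`, evaluated at the linear
form `T_k`; its derivative `(a - b) / ((1 + a x) (1 + b x))` decreases on `x ≥ 0`, so it is
concave.
-/

open Finset

theorem concaveOn_sum {𝕜 E β ι : Type*} [Semiring 𝕜] [PartialOrder 𝕜] [AddCommMonoid E]
    [AddCommMonoid β] [PartialOrder β] [IsOrderedAddMonoid β] [SMul 𝕜 E]
    [DistribMulAction 𝕜 β] {s : Set E} (hs : Convex 𝕜 s) {t : Finset ι} {f : ι → E → β}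
    (hf : ∀ i ∈ t, ConcaveOn 𝕜 s (f i)) : ConcaveOn 𝕜 s (fun x => ∑ i ∈ t, f i x) := by
  refine ⟨hs, fun x hx y hy a b ha hb hab => ?_⟩
  simp only [smul_sum, ← sum_add_distrib]
  exact sum_le_sum fun i hi => (hf i hi).2 hx hy ha hb hab

theorem Finset.sum_range_succ_eq_sum_range {M : Type*} [AddCommMonoid M] (u : ℕ → M) {n : ℕ}
    (h₀ : u 0 = 0) (hn : u n = 0) : ∑ i ∈ range n, u (i + 1) = ∑ i ∈ range n, u i := by
  have := (sum_range_succ' u n).symm.trans (sum_range_succ u n)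
  rwa [h₀, hn, add_zero, add_zero] at this

namespace Real

theorem concaveOn_log_one_add_mul_sub_log_one_add_mul {a b : ℝ} (hb : 0 ≤ b) (hba : b ≤ a) :
    ConcaveOn ℝ (Set.Ici 0) (fun x => log (1 + a * x) - log (1 + b * x)) := by
  have ha : 0 ≤ a := hb.trans hba
  have hpos : ∀ {c x : ℝ}, 0 ≤ c → 0 ≤ x → 0 < 1 + c * x := fun hc hx => by positivity
  have hderiv : ∀ x, 0 ≤ x → HasDerivAt (fun x => log (1 + a * x) - log (1 + b * x))
      ((a - b) / ((1 + a * x) * (1 + b * x))) x := by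
    intro x hx
    have hlog : ∀ {c : ℝ}, 0 ≤ c → HasDerivAt (fun x => log (1 + c * x)) (c / (1 + c * x)) x :=
      fun hc => by simpa using (((hasDerivAt_id x).const_mul _).const_add 1).log (hpos hc hx).ne'
    refine ((hlog ha).sub (hlog hb)).congr_deriv ?_
    rw [div_sub_div _ _ (hpos ha hx).ne' (hpos hb hx).ne']
    ring
  refine AntitoneOn.concaveOn_of_deriv (convex_Ici 0) ?_ ?_ ?_
  · exact fun x hx => (hderiv x hx).continuousAt.continuousWithinAt
  · rw [interior_Ici]
    exact fun x hx => (hderiv x (le_of_lt hx)).differentiableAt.differentiableWithinAt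
  · rw [interior_Ici]
    intro x (hx : 0 < x) y (hy : 0 < y) hxy
    rw [(hderiv x hx.le).deriv, (hderiv y hy.le).deriv]
    gcongr

theorem log_one_add_mul_div_eq_log_sub_log {c q t : ℝ} (ht : 1 + c * t ≠ 0)
    (hqt : 1 + c * (q + t) ≠ 0) :
    log (1 + q * c / (1 + c * t)) = log (1 + c * (q + t)) - log (1 + c * t) := by
  rw [← log_div hqt ht]
  congr 1
  field_simp
  ring

end Real

section TailSum

variable {K : ℕ}

def tailSum (K m : ℕ) : (Fin K → ℝ) →ₗ[ℝ] ℝ :=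
  ∑ j ∈ univ.filter (fun j : Fin K => m ≤ j), LinearMap.proj j

theorem tailSum_apply (m : ℕ) (p : Fin K → ℝ) :
    tailSum K m p = ∑ j ∈ univ.filter (fun j : Fin K => m ≤ j), p j := by
  simp [tailSum]

theorem tailSum_nonneg {p : Fin K → ℝ} (hp : 0 ≤ p) (m : ℕ) : 0 ≤ tailSum K m p := by
  rw [tailSum_apply]
  exact sum_nonneg fun j _ => hp j

theorem tailSum_of_le {m : ℕ} (hm : K ≤ m) (p : Fin K → ℝ) : tailSum K m p = 0 := by
  rw [tailSum_apply, sum_eq_zero]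
  intro j hj
  have := (mem_filter.1 hj).2
  omega

theorem sum_filter_le_eq_tailSum (k : Fin K) (p : Fin K → ℝ) :
    ∑ j ∈ univ.filter (fun j => k ≤ j), p j = tailSum K k p := by
  rw [tailSum_apply]
  rfl

theorem sum_filter_lt_eq_tailSum (k : Fin K) (p : Fin K → ℝ) :
    ∑ j ∈ univ.filter (fun j => k < j), p j = tailSum K (k + 1) p := by
  rw [tailSum_apply]
  rfl

theorem tailSum_eq_add (k : Fin K) (p : Fin K → ℝ) :
    tailSum K k p = p k + tailSum K (k + 1) p := by
  rw [← sum_filter_le_eq_tailSum, ← sum_filter_lt_eq_tailSum, filter_le_eq_Ici,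
    filter_lt_eq_Ioi, Ici_eq_cons_Ioi, sum_cons]

end TailSum

def prevGain {K : ℕ} (h : Fin K → ℝ) : ℕ → ℝ
  | 0 => 0
  | m + 1 => if hm : m < K then h ⟨m, hm⟩ else 0

section PrevGain

variable {K : ℕ} {h : Fin K → ℝ}

theorem prevGain_succ (h : Fin K → ℝ) (k : Fin K) : prevGain h (k + 1) = h k := by
  simp [prevGain]

theorem prevGain_nonneg (h0 : 0 ≤ h) (m : ℕ) : 0 ≤ prevGain h m := by
  cases m with
  | zero => exact le_rfl
  | succ m =>
    simp only [prevGain]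
    split_ifs
    exacts [h0 _, le_rfl]

theorem prevGain_le (h0 : 0 ≤ h) (hmono : Monotone h) (k : Fin K) : prevGain h k ≤ h k := by
  obtain ⟨_ | m, hk⟩ := k
  · exact h0 _
  · rw [prevGain_succ h ⟨m, by omega⟩]
    exact hmono (Fin.mk_le_mk.2 m.le_succ)

end PrevGain

section SumRate

variable {K : ℕ} {h : Fin K → ℝ}

open Real

noncomputable def sumRate (h p : Fin K → ℝ) : ℝ :=
  ∑ k, log (1 + p k * h k / (1 + h k * tailSum K (k + 1) p))

theorem sumRate_eq_sum_log_sub_log (h0 : 0 ≤ h) {p : Fin K → ℝ} (hp : 0 ≤ p) :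
    sumRate h p =
      ∑ k, (log (1 + h k * tailSum K k p) - log (1 + h k * tailSum K (k + 1) p)) := by
  refine sum_congr rfl fun k _ => ?_
  have hne : ∀ x, 0 ≤ x → 1 + h k * x ≠ 0 := fun x hx =>
    (add_pos_of_pos_of_nonneg one_pos (mul_nonneg (h0 k) hx)).ne'
  have hT := tailSum_nonneg hp (k + 1)
  rw [tailSum_eq_add k p]
  exact log_one_add_mul_div_eq_log_sub_log (hne _ hT) (hne _ (add_nonneg (hp k) hT))

theorem sum_log_one_add_mul_tailSum_succ (h p : Fin K → ℝ) :
    ∑ k, log (1 + h k * tailSum K (k + 1) p) =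
      ∑ k : Fin K, log (1 + prevGain h k * tailSum K k p) := by
  set u : ℕ → ℝ := fun m => log (1 + prevGain h m * tailSum K m p)
  calc ∑ k, log (1 + h k * tailSum K (k + 1) p) = ∑ k : Fin K, u (k + 1) := by
        simp only [u, prevGain_succ]
    _ = ∑ m ∈ range K, u (m + 1) := Fin.sum_univ_eq_sum_range (fun m => u (m + 1)) K
    _ = ∑ m ∈ range K, u m :=
        sum_range_succ_eq_sum_range u (by simp [u, prevGain]) (by simp [u, tailSum_of_le le_rfl])
    _ = ∑ k : Fin K, u k := (Fin.sum_univ_eq_sum_range u K).symm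

theorem sumRate_eq_sum_log_sub_log_prevGain (h0 : 0 ≤ h) {p : Fin K → ℝ} (hp : 0 ≤ p) :
    sumRate h p =
      ∑ k, (log (1 + h k * tailSum K k p) - log (1 + prevGain h k * tailSum K k p)) := by
  rw [sumRate_eq_sum_log_sub_log h0 hp, sum_sub_distrib, sum_sub_distrib,
    sum_log_one_add_mul_tailSum_succ]

theorem concaveOn_sumRate (h0 : 0 ≤ h) (hmono : Monotone h) :
    ConcaveOn ℝ (Set.Ici 0) (sumRate h) := by
  have hsummand (k : Fin K) : ConcaveOn ℝ (Set.Ici 0) fun p =>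
      log (1 + h k * tailSum K k p) - log (1 + prevGain h k * tailSum K k p) :=
    ((concaveOn_log_one_add_mul_sub_log_one_add_mul (prevGain_nonneg h0 k)
      (prevGain_le h0 hmono k)).comp_linearMap (tailSum K k)).subset
      (fun p hp => tailSum_nonneg hp k) (convex_Ici 0)
  exact (concaveOn_sum (convex_Ici 0) fun k _ => hsummand k).congr
    fun p hp => (sumRate_eq_sum_log_sub_log_prevGain h0 hp).symm

end SumRate

/-- Telescoped form and concavity of the NOMA cluster sum-rate: with `0 < h 1 < ... < h K`,
`∑ k log(1 + p k h k / (1 + h k ∑_{j>k} p j))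
  = ∑ k [log(1 + h k ∑_{j≥k} p j) - log(1 + h k ∑_{j>k} p j)]`
for nonnegative `p`, and the sum-rate is concave on the nonnegative orthant. -/
theorem noma_sum_rate_telescoped_and_concave
    (K : ℕ) (h : Fin K → ℝ) (hpos : ∀ k, 0 < h k) (hmono : StrictMono h) :
    (∀ p : Fin K → ℝ, (∀ k, 0 ≤ p k) →
      ∑ k, Real.log (1 + p k * h k /
          (1 + h k * ∑ j ∈ univ.filter (fun j => k < j), p j))
        = ∑ k, (Real.log (1 + h k * ∑ j ∈ univ.filter (fun j => k ≤ j), p j)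
              - Real.log (1 + h k * ∑ j ∈ univ.filter (fun j => k < j), p j))) ∧
    ConcaveOn ℝ {p : Fin K → ℝ | ∀ k, 0 ≤ p k}
      (fun p => ∑ k, Real.log (1 + p k * h k /
        (1 + h k * ∑ j ∈ univ.filter (fun j => k < j), p j))) := by
  simp only [sum_filter_le_eq_tailSum, sum_filter_lt_eq_tailSum]
  have h0 : 0 ≤ h := fun k => (hpos k).le
  exact ⟨fun p hp => sumRate_eq_sum_log_sub_log h0 hp, concaveOn_sumRate h0 hmono.monotone⟩
end

section
/- The sum-rate of a K-user NOMA cluster is strictly increasing in the power of the cluster-head user: if p and p' agree in all coordinates except p'_K > p_K, then Σ_k R_k(p') > Σ_k R_k(p). -/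
/-!
With `S k = p k + ⋯ + p K` the power of users `k, …, K`, user `k` sees interference `S (k+1)`, so
`R k = W (log₂(1 + h k S k) - log₂(1 + h k S (k+1)))` and the sum-rate is
`W (∑ k, log₂(1 + h k S k) - ∑ k < K, log₂(1 + h k S (k+1)))`.
Raising `p K` by `δ` raises every `S k` by `δ`. The increment
`log₂(1 + a (x + δ)) - log₂(1 + a x) = log₂(1 + δ / (1/a + x))` is nondecreasing in `a`, so since `h`
is increasing the gain of the term `h (k+1) S (k+1)` covers the loss of the term `h k S (k+1)`,
and the unmatched term `h 0 S 0` gains strictly.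
-/

open Finset

noncomputable def capacity (a x : ℝ) : ℝ := Real.logb 2 (1 + a * x)

lemma capacity_zero_right (a : ℝ) : capacity a 0 = 0 := by simp [capacity]

lemma capacity_lt_capacity {a x y : ℝ} (ha : 0 < a) (hx : 0 ≤ x) (hxy : x < y) :
    capacity a x < capacity a y :=
  Real.logb_lt_logb one_lt_two (by positivity) (by gcongr)

lemma capacity_add_sub_capacity_le {a b x δ : ℝ} (ha : 0 ≤ a) (hab : a ≤ b) (hx : 0 ≤ x)
    (hδ : 0 ≤ δ) : capacity a (x + δ) - capacity a x ≤ capacity b (x + δ) - capacity b x := by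
  have hb : 0 ≤ b := ha.trans hab
  unfold capacity
  rw [← Real.logb_div (by positivity) (by positivity),
    ← Real.logb_div (by positivity) (by positivity)]
  refine Real.logb_le_logb_of_le one_lt_two (by positivity) ?_
  rw [div_le_div_iff₀ (by positivity) (by positivity)]
  nlinarith [mul_nonneg (sub_nonneg.2 hab) hδ]

noncomputable def interference {K : ℕ} (p : Fin K → ℝ) (k : Fin K) : ℝ := ∑ j ∈ Ioi k, p j

noncomputable def tailPower {K : ℕ} (p : Fin K → ℝ) (k : Fin K) : ℝ := ∑ j ∈ Ici k, p j

lemma interference_nonneg {K : ℕ} {p : Fin K → ℝ} (hp : ∀ k, 0 ≤ p k) (k : Fin K) :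
    0 ≤ interference p k :=
  sum_nonneg fun j _ => hp j

lemma interference_last {K : ℕ} (p : Fin (K + 1) → ℝ) : interference p (Fin.last K) = 0 := by
  rw [interference, ← Fin.top_eq_last, Ioi_top, sum_empty]

lemma interference_castSucc {K : ℕ} (p : Fin (K + 1) → ℝ) (i : Fin K) :
    interference p i.castSucc = tailPower p i.succ := by
  unfold interference tailPower
  congr 1
  ext j
  simp [Fin.castSucc_lt_iff_succ_le]

lemma add_interference_eq_tailPower {K : ℕ} (p : Fin K → ℝ) (k : Fin K) :
    p k + interference p k = tailPower p k :=
  add_sum_Ioi_eq_sum_Ici k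

lemma tailPower_update_last {K : ℕ} (p : Fin (K + 1) → ℝ) (v : ℝ) (k : Fin (K + 1)) :
    tailPower (Function.update p (Fin.last K) v) k = tailPower p k + (v - p (Fin.last K)) := by
  have hlast : Fin.last K ∈ Ici k := mem_Ici.2 (Fin.le_last k)
  unfold tailPower
  rw [sum_update_of_mem hlast, ← add_sum_erase _ _ hlast, sdiff_singleton_eq_erase]
  ring

lemma nomaRate_eq {K : ℕ} (W : ℝ) (h p : Fin K → ℝ) {k : Fin K} (hh : 0 ≤ h k)
    (hp : ∀ j, 0 ≤ p j) :
    nomaRate W h p k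
      = W * (capacity (h k) (tailPower p k) - capacity (h k) (interference p k)) := by
  have hI := interference_nonneg hp k
  have hI' : 0 < 1 + h k * interference p k := by positivity
  have hT : 0 < 1 + h k * tailPower p k := by
    rw [← add_interference_eq_tailPower]; have := hp k; positivity
  rw [capacity, capacity, ← Real.logb_div hT.ne' hI'.ne', nomaRate, filter_lt_eq_Ioi,
    ← add_interference_eq_tailPower]
  congr 2
  unfold interference at *
  field_simp
  ring

lemma sum_nomaRate_eq {K : ℕ} (W : ℝ) (h p : Fin (K + 1) → ℝ) (hh : ∀ k, 0 ≤ h k)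
    (hp : ∀ k, 0 ≤ p k) :
    ∑ k, nomaRate W h p k = W * (∑ k, capacity (h k) (tailPower p k)
      - ∑ i : Fin K, capacity (h i.castSucc) (tailPower p i.succ)) := by
  simp only [nomaRate_eq W h p (hh _) hp, ← mul_sum, sum_sub_distrib]
  rw [Fin.sum_univ_castSucc (fun k => capacity (h k) (interference p k)), interference_last,
    capacity_zero_right, add_zero]
  simp only [interference_castSucc]

lemma sum_capacity_sub_sum_capacity_lt {K : ℕ} {h x : Fin (K + 1) → ℝ} {δ : ℝ} (h0 : 0 < h 0)
    (hmono : Monotone h) (hx : ∀ k, 0 ≤ x k) (hδ : 0 < δ) :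
    ∑ k, capacity (h k) (x k) - ∑ i : Fin K, capacity (h i.castSucc) (x i.succ)
      < ∑ k, capacity (h k) (x k + δ) - ∑ i : Fin K, capacity (h i.castSucc) (x i.succ + δ) := by
  have hh : ∀ k, 0 ≤ h k := fun k => h0.le.trans (hmono (Fin.zero_le k))
  have head : capacity (h 0) (x 0) < capacity (h 0) (x 0 + δ) :=
    capacity_lt_capacity h0 (hx 0) (lt_add_of_pos_right _ hδ)
  have step := sum_le_sum (s := univ) fun (i : Fin K) _ =>
    capacity_add_sub_capacity_le (hh i.castSucc) (hmono (Fin.castSucc_le_succ i)) (hx i.succ) hδ.le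
  rw [sum_sub_distrib, sum_sub_distrib] at step
  rw [Fin.sum_univ_succ, Fin.sum_univ_succ (fun k => capacity (h k) (x k + δ))]
  linarith

/-- The NOMA cluster sum-rate is strictly increasing in the cluster-head user's power:
increasing only the head user's power strictly increases the sum-rate. -/
theorem noma_sum_rate_strictly_increasing_in_head_power
    (K : ℕ) (W : ℝ) (hW : 0 < W)
    (h : Fin (K + 1) → ℝ) (hpos : ∀ k, 0 < h k) (hmono : StrictMono h)
    (p : Fin (K + 1) → ℝ) (hp : ∀ k, 0 ≤ p k)
    (v : ℝ) (hv : p (Fin.last K) < v) :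
    ∑ k, nomaRate W h p k < ∑ k, nomaRate W h (Function.update p (Fin.last K) v) k := by
  have hh : ∀ k, 0 ≤ h k := fun k => (hpos k).le
  have hq : ∀ k, 0 ≤ Function.update p (Fin.last K) v k := by
    intro k
    rcases eq_or_ne k (Fin.last K) with rfl | hk
    · simpa using (hp _).trans hv.le
    · simpa [hk] using hp k
  rw [sum_nomaRate_eq W h p hh hp, sum_nomaRate_eq W h _ hh hq]
  simp only [tailPower_update_last]
  exact mul_lt_mul_of_pos_left (sum_capacity_sub_sum_capacity_lt (hpos 0) hmono.monotone
    (fun k => sum_nonneg fun j _ => hp j) (sub_pos.2 hv)) hW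
end

section
/- Transferring power from any non-head user to the cluster-head user strictly increases the NOMA cluster sum-rate: for ε > 0 small, replacing (p_i, p_K) by (p_i - ε, p_K + ε) for i < K strictly increases Σ_k log(1 + p_k h_k/(1 + h_k Σ_{j>k} p_j)), provided p_i ≥ ε. -/
/-!
With the tail sums `S k = ∑ j ≥ k, p j`, the rate of user `k` is
`log (1 + h k * S k) - log (1 + h k * S (k + 1))`, so regrouping by `S` writes the sum-rate as
`log (1 + h 0 * S 0) + ∑ k ≥ 1, (log (1 + h k * S k) - log (1 + h (k - 1) * S k))`.
Since `h (k - 1) < h k`, each summand is strictly increasing in `S k`. Moving `ε` from user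
`i` to the head keeps `S 0` and raises `S k` by `ε` for every `k > i`.
-/

open Finset

noncomputable def nomaSumRate {ι : Type*} [Fintype ι] [LinearOrder ι] [LocallyFiniteOrderTop ι]
    (h p : ι → ℝ) : ℝ :=
  ∑ k, Real.log (1 + p k * h k / (1 + h k * ∑ j ∈ Ioi k, p j))

lemma log_one_add_div_eq_log_sub_log {x q t : ℝ} (ht : 0 < 1 + x * t)
    (hqt : 0 < 1 + x * (q + t)) :
    Real.log (1 + q * x / (1 + x * t)) = Real.log (1 + x * (q + t)) - Real.log (1 + x * t) := by
  rw [← Real.log_div hqt.ne' ht.ne']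
  congr 1
  field_simp
  ring

lemma strictMonoOn_log_one_add_mul_sub {a b : ℝ} (ha : 0 ≤ a) (hab : a < b) :
    StrictMonoOn (fun s => Real.log (1 + b * s) - Real.log (1 + a * s)) (Set.Ici 0) := by
  intro s (hs : 0 ≤ s) t (ht : 0 ≤ t) hst
  have hb : 0 ≤ b := ha.trans hab.le
  have has : 0 < 1 + a * s := by positivity
  have hat : 0 < 1 + a * t := by positivity
  simp only
  rw [← Real.log_div (by positivity) has.ne', ← Real.log_div (by positivity) hat.ne']
  refine Real.log_lt_log (by positivity) ?_
  rw [div_lt_div_iff₀ has hat]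
  nlinarith [mul_lt_mul_of_pos_left hst (sub_pos.mpr hab)]

section

variable {M : Type*} {n : ℕ}

lemma Fin.sum_Ioi_castSucc [AddCommMonoid M] (f : Fin (n + 1) → M) (j : Fin n) :
    ∑ k ∈ Ioi j.castSucc, f k = ∑ k ∈ Ici j.succ, f k := by
  congr 1
  ext k
  simp [Fin.castSucc_lt_iff_succ_le]

lemma Fin.sum_Ioi_last [AddCommMonoid M] (f : Fin (n + 1) → M) :
    ∑ k ∈ Ioi (Fin.last n), f k = 0 := by
  rw [← Fin.top_eq_last, Ioi_top, sum_empty]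

lemma sum_transfer {ι : Type*} [DecidableEq ι] [AddCommGroup M] {p q : ι → M} {a b : ι}
    (hab : a ≠ b) {ε : M}
    (hq : ∀ k, q k = if k = a then p k - ε else if k = b then p k + ε else p k)
    (s : Finset ι) :
    ∑ k ∈ s, q k = ∑ k ∈ s, p k - (if a ∈ s then ε else 0) + (if b ∈ s then ε else 0) := by
  have hq' : ∀ k, q k = p k - (if k = a then ε else 0) + (if k = b then ε else 0) := by
    intro k
    rw [hq]
    split_ifs <;> simp_all
  simp [hq', sum_add_distrib, sum_sub_distrib]

lemma Fin.sum_Ici_transfer_to_last [AddCommGroup M] {p q : Fin (n + 1) → M}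
    {i : Fin (n + 1)} (hi : i ≠ Fin.last n) {ε : M}
    (hq : ∀ k, q k = if k = i then p k - ε else if k = Fin.last n then p k + ε else p k)
    (k : Fin (n + 1)) :
    ∑ j ∈ Ici k, q j = ∑ j ∈ Ici k, p j + if i < k then ε else 0 := by
  rw [sum_transfer hi hq, if_pos (mem_Ici.mpr (Fin.le_last k))]
  by_cases hik : i < k
  · simp [hik, hik.not_ge]
  · simp [hik, not_lt.mp hik]

end

lemma nomaSumRate_eq_log_add_sum {n : ℕ} {h p : Fin (n + 1) → ℝ} (hh : ∀ k, 0 ≤ h k)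
    (hS : ∀ k, 0 ≤ ∑ j ∈ Ici k, p j) :
    nomaSumRate h p = Real.log (1 + h 0 * ∑ j ∈ Ici 0, p j) +
      ∑ j : Fin n, (Real.log (1 + h j.succ * ∑ k ∈ Ici j.succ, p k)
        - Real.log (1 + h j.castSucc * ∑ k ∈ Ici j.succ, p k)) := by
  have hT : ∀ k, 0 ≤ ∑ j ∈ Ioi k, p j := by
    refine Fin.lastCases (Fin.sum_Ioi_last p).ge fun j => ?_
    rw [Fin.sum_Ioi_castSucc]
    exact hS _
  have hrate : ∀ k, Real.log (1 + p k * h k / (1 + h k * ∑ j ∈ Ioi k, p j))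
      = Real.log (1 + h k * ∑ j ∈ Ici k, p j) - Real.log (1 + h k * ∑ j ∈ Ioi k, p j) := by
    intro k
    have hSk := hS k
    rw [← add_sum_Ioi_eq_sum_Ici] at hSk ⊢
    exact log_one_add_div_eq_log_sub_log (by nlinarith [hh k, hT k]) (by nlinarith [hh k])
  rw [nomaSumRate, sum_congr rfl fun k _ => hrate k, sum_sub_distrib, Fin.sum_univ_succ,
    Fin.sum_univ_castSucc, sum_sub_distrib]
  simp only [Fin.sum_Ioi_castSucc, Fin.sum_Ioi_last, mul_zero, add_zero, Real.log_one]
  ring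

theorem noma_power_transfer_to_head_increases_sum_rate_general
    (K : ℕ) (h : Fin (K + 1) → ℝ) (hpos : ∀ k, 0 < h k) (hmono : StrictMono h)
    (p : Fin (K + 1) → ℝ) (hp : ∀ k, 0 ≤ p k)
    (i : Fin (K + 1)) (hi : i ≠ Fin.last K)
    (ε : ℝ) (hε : 0 < ε)
    (p' : Fin (K + 1) → ℝ)
    (hp' : ∀ k, p' k = if k = i then p k - ε
      else if k = Fin.last K then p k + ε else p k) :
    ∑ k, Real.log (1 + p k * h k /
        (1 + h k * ∑ j ∈ univ.filter (fun j => k < j), p j))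
      < ∑ k, Real.log (1 + p' k * h k /
        (1 + h k * ∑ j ∈ univ.filter (fun j => k < j), p' j)) := by
  have hh : ∀ k, 0 ≤ h k := fun k => (hpos k).le
  have hS : ∀ k, 0 ≤ ∑ j ∈ Ici k, p j := fun k => sum_nonneg fun j _ => hp j
  have hS' := Fin.sum_Ici_transfer_to_last hi hp'
  have hS_le : ∀ k, ∑ j ∈ Ici k, p j ≤ ∑ j ∈ Ici k, p' j := fun k => by
    rw [hS']
    split_ifs <;> linarith
  have hS'_nonneg : ∀ k, 0 ≤ ∑ j ∈ Ici k, p' j := fun k => (hS k).trans (hS_le k)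
  simp only [filter_lt_eq_Ioi]
  change nomaSumRate h p < nomaSumRate h p'
  rw [nomaSumRate_eq_log_add_sum hh hS, nomaSumRate_eq_log_add_sum hh hS'_nonneg,
    hS' 0, if_neg (Fin.not_lt_zero i), add_zero]
  obtain ⟨j₀, rfl⟩ := Fin.exists_castSucc_eq.mpr hi
  have hgain (j : Fin K) :=
    strictMonoOn_log_one_add_mul_sub (hh j.castSucc) (hmono j.castSucc_lt_succ)
  refine add_lt_add_right (sum_lt_sum (fun j _ => ?_) ⟨j₀, mem_univ _, ?_⟩) _
  · exact (hgain j).monotoneOn (hS _) (hS'_nonneg _) (hS_le _)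
  · refine hgain j₀ (hS _) (hS'_nonneg _) ?_
    rw [hS', if_pos j₀.castSucc_lt_succ]
    linarith

/-- Transferring power `ε > 0` from any non-head user `i` to the cluster-head user strictly
increases the NOMA cluster sum-rate, provided `ε ≤ p i`. -/
theorem noma_power_transfer_to_head_increases_sum_rate
    (K : ℕ) (h : Fin (K + 1) → ℝ) (hpos : ∀ k, 0 < h k) (hmono : StrictMono h)
    (p : Fin (K + 1) → ℝ) (hp : ∀ k, 0 ≤ p k)
    (i : Fin (K + 1)) (hi : i ≠ Fin.last K)
    (ε : ℝ) (hε : 0 < ε) (hεp : ε ≤ p i)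
    (p' : Fin (K + 1) → ℝ)
    (hp' : ∀ k, p' k = if k = i then p k - ε
      else if k = Fin.last K then p k + ε else p k) :
    ∑ k, Real.log (1 + p k * h k /
        (1 + h k * ∑ j ∈ univ.filter (fun j => k < j), p j))
      < ∑ k, Real.log (1 + p' k * h k /
        (1 + h k * ∑ j ∈ univ.filter (fun j => k < j), p' j)) :=
  noma_power_transfer_to_head_increases_sum_rate_general K h hpos hmono p hp i hi ε hε p' hp'
end

section
/- Feasibility characterization: the multicarrier NOMA power allocation problem with per-subchannel minimum rates, per-subchannel mask powers P_n^mask, and total power P^max has a feasible point if and only if Q_n^min ≤ P_n^mask for all subchannels n and Σ_n Q_n^min ≤ P^max, where Q_n^min is the minimal total power on subchannel n needed to meet all its users' minimum rates (given in closed form by the triangular-system solution). -/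
/-!
On one subchannel, with `β k = 2 ^ (R_k / W) - 1`, user `k` meets its minimum rate exactly when
`β k * (1 / h k + ∑_{j > k} p j) ≤ p k`: only users with a larger channel gain interfere with it
after successive interference cancellation. This triangular system of inequalities is solved with
equality by the closed-form powers, and by downward induction on `k` every solution dominates
them termwise. Hence `Q_n^min` is the least total power on subchannel `n`, and the coupled
constraints `∑_k p_k^n ≤ P_n^mask` and `∑_n ∑_k p_k^n ≤ P^max` are satisfiable iff they hold
for the closed-form powers.
-/

open Finset

lemma Fin.Ioi_castSucc {m : ℕ} (k : Fin m) : Ioi k.castSucc = insert k.succ (Ioi k.succ) := by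
  ext l
  simp only [mem_Ioi, mem_insert, Fin.lt_def, Fin.ext_iff, Fin.val_castSucc, Fin.val_succ]
  omega

lemma Fin.Ioi_last (m : ℕ) : Ioi (Fin.last m) = ∅ :=
  Ioi_eq_empty.2 fun _ _ => Fin.le_last _

lemma Fin.Ioo_castSucc_succ {m : ℕ} (k : Fin m) : Ioo k.castSucc k.succ = ∅ := by
  ext l
  simp only [mem_Ioo, Fin.lt_def, Fin.val_castSucc, Fin.val_succ, notMem_empty, iff_false]
  omega

lemma Fin.Ioo_castSucc_of_succ_lt {m : ℕ} {k : Fin m} {j : Fin (m + 1)} (hj : k.succ < j) :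
    Ioo k.castSucc j = insert k.succ (Ioo k.succ j) := by
  ext l
  simp only [mem_Ioo, mem_insert, Fin.lt_def, Fin.ext_iff, Fin.val_castSucc, Fin.val_succ] at *
  omega

namespace MultiCarrierNOMA

lemma le_rate_iff {W R g p Q : ℝ} (hW : 0 < W) (hg : 0 < g) (hp : 0 ≤ p) (hQ : 0 ≤ Q) :
    R ≤ W * Real.logb 2 (1 + p * g / (1 + g * Q)) ↔ ((2 : ℝ) ^ (R / W) - 1) * (1 / g + Q) ≤ p := by
  have hden : 0 < 1 + g * Q := by positivity
  rw [← div_le_iff₀' hW, Real.le_logb_iff_rpow_le one_lt_two (by positivity), ← sub_le_iff_le_add',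
    le_div_iff₀ hden, show 1 + g * Q = (1 / g + Q) * g by field_simp, ← mul_assoc,
    mul_le_mul_iff_of_pos_right hg]

variable {m : ℕ} (h β : Fin m → ℝ)

/-- The interference `∑_{j > k} p j` seen by user `k` under the closed-form powers. -/
noncomputable def interference (k : Fin m) : ℝ :=
  ∑ j ∈ Ioi k, β j / h j * ∏ l ∈ Ioo k j, (1 + β l)

/-- The closed-form solution of `p k = β k * (1 / h k + ∑_{j > k} p j)`. -/
noncomputable def minPower (k : Fin m) : ℝ :=
  β k * (1 / h k + interference h β k)

lemma interference_last (h β : Fin (m + 1) → ℝ) : interference h β (Fin.last m) = 0 := by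
  simp [interference, Fin.Ioi_last]

lemma interference_castSucc (h β : Fin (m + 1) → ℝ) (k : Fin m) :
    interference h β k.castSucc = β k.succ / h k.succ + (1 + β k.succ) * interference h β k.succ := by
  rw [interference, interference, Fin.Ioi_castSucc, sum_insert (by simp), Fin.Ioo_castSucc_succ,
    prod_empty, mul_one, mul_sum]
  congr 1
  refine sum_congr rfl fun j hj => ?_
  rw [Fin.Ioo_castSucc_of_succ_lt (mem_Ioi.1 hj), prod_insert (by simp)]
  ring

lemma sum_minPower_Ioi (k : Fin m) : ∑ j ∈ Ioi k, minPower h β j = interference h β k := by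
  cases m with
  | zero => exact k.elim0
  | succ m =>
    induction k using Fin.reverseInduction with
    | last => simp [interference_last, Fin.Ioi_last]
    | cast k ih =>
      rw [Fin.Ioi_castSucc, sum_insert (by simp), ih, interference_castSucc, minPower]
      ring

variable {h β}

lemma interference_nonneg (hβ : ∀ k, 0 ≤ β k) (hh : ∀ k, 0 ≤ h k) (k : Fin m) :
    0 ≤ interference h β k :=
  sum_nonneg fun j _ => mul_nonneg (div_nonneg (hβ j) (hh j)) <|
    prod_nonneg fun l _ => by linarith [hβ l]

lemma minPower_nonneg (hβ : ∀ k, 0 ≤ β k) (hh : ∀ k, 0 ≤ h k) (k : Fin m) :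
    0 ≤ minPower h β k :=
  mul_nonneg (hβ k) <| add_nonneg (one_div_nonneg.2 (hh k)) (interference_nonneg hβ hh k)

lemma interference_le_sum_Ioi (hβ : ∀ k, 0 ≤ β k) {p : Fin m → ℝ}
    (hp : ∀ k, β k * (1 / h k + ∑ j ∈ Ioi k, p j) ≤ p k) (k : Fin m) :
    interference h β k ≤ ∑ j ∈ Ioi k, p j := by
  cases m with
  | zero => exact k.elim0
  | succ m =>
    induction k using Fin.reverseInduction with
    | last => simp [interference_last, Fin.Ioi_last]
    | cast k ih =>
      rw [interference_castSucc, Fin.Ioi_castSucc, sum_insert (by simp)]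
      have hk := hp k.succ
      rw [mul_add, ← div_eq_mul_one_div] at hk
      linarith [mul_le_mul_of_nonneg_left ih (hβ k.succ)]

lemma minPower_le (hβ : ∀ k, 0 ≤ β k) {p : Fin m → ℝ}
    (hp : ∀ k, β k * (1 / h k + ∑ j ∈ Ioi k, p j) ≤ p k) (k : Fin m) :
    minPower h β k ≤ p k :=
  (mul_le_mul_of_nonneg_left (add_le_add_right (interference_le_sum_Ioi hβ hp k) _) (hβ k)).trans
    (hp k)

end MultiCarrierNOMA

open MultiCarrierNOMA

theorem mc_noma_feasibility_iff_general
    (N : ℕ) (M : Fin N → ℕ) (Ws : ℝ) (hW : 0 < Ws)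
    (h : (n : Fin N) → Fin (M n) → ℝ)
    (hpos : ∀ n k, 0 < h n k)
    (Rmin : (n : Fin N) → Fin (M n) → ℝ) (hR : ∀ n k, 0 ≤ Rmin n k)
    (Pmask : Fin N → ℝ) (Pmax : ℝ)
    (β : (n : Fin N) → Fin (M n) → ℝ)
    (hβ : ∀ n k, β n k = (2 : ℝ) ^ (Rmin n k / Ws) - 1)
    (Qmin : Fin N → ℝ)
    (hQ : ∀ n, Qmin n = ∑ k, β n k * (1 / h n k +
      ∑ j ∈ univ.filter (fun j => k < j),
        (β n j / h n j) * ∏ l ∈ univ.filter (fun l => k < l ∧ l < j), (1 + β n l))) :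
    (∃ p : (n : Fin N) → Fin (M n) → ℝ,
      (∀ n k, 0 ≤ p n k) ∧
      (∀ n k, Rmin n k ≤ Ws * Real.logb 2 (1 + p n k * h n k /
          (1 + h n k * ∑ j ∈ univ.filter (fun j => k < j), p n j))) ∧
      (∀ n, ∑ k, p n k ≤ Pmask n) ∧
      (∑ n, ∑ k, p n k ≤ Pmax))
    ↔ ((∀ n, Qmin n ≤ Pmask n) ∧ ∑ n, Qmin n ≤ Pmax) := by
  have hβ0 n k : 0 ≤ β n k := by
    rw [hβ, sub_nonneg]
    exact Real.one_le_rpow one_le_two (div_nonneg (hR n k) hW.le)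
  have hh0 n k : 0 ≤ h n k := (hpos n k).le
  have hQmin n : Qmin n = ∑ k, minPower (h n) (β n) k := by
    simp only [hQ, filter_lt_eq_Ioi, filter_lt_lt_eq_Ioo]
    rfl
  simp only [filter_lt_eq_Ioi]
  constructor
  · rintro ⟨p, hp0, hrate, hmask, htot⟩
    have hle n : Qmin n ≤ ∑ k, p n k := by
      rw [hQmin]
      refine sum_le_sum fun k _ => minPower_le (hβ0 n) (fun k => ?_) k
      rw [hβ]
      exact (le_rate_iff hW (hpos n k) (hp0 n k) (sum_nonneg fun j _ => hp0 n j)).1 (hrate n k)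
    exact ⟨fun n => (hle n).trans (hmask n), (sum_le_sum fun n _ => hle n).trans htot⟩
  · rintro ⟨hmask, htot⟩
    refine ⟨fun n => minPower (h n) (β n), fun n => minPower_nonneg (hβ0 n) (hh0 n),
      fun n k => ?_, fun n => hQmin n ▸ hmask n, by simpa only [hQmin] using htot⟩
    rw [le_rate_iff hW (hpos n k) (minPower_nonneg (hβ0 n) (hh0 n) k)
      (sum_nonneg fun j _ => minPower_nonneg (hβ0 n) (hh0 n) j), ← hβ, sum_minPower_Ioi]
    rfl

/-- Feasibility characterization of multicarrier NOMA power allocation: with per-subchannel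
minimum rates, mask powers `Pmask n` and total budget `Pmax`, a feasible power allocation
exists iff `Qmin n ≤ Pmask n` for every subchannel `n` and `∑ n, Qmin n ≤ Pmax`, where
`Qmin n` is the (closed-form) minimal total power on subchannel `n` meeting all its users'
minimum rates with equality. -/
theorem mc_noma_feasibility_iff
    (N : ℕ) (M : Fin N → ℕ) (Ws : ℝ) (hW : 0 < Ws)
    (h : (n : Fin N) → Fin (M n) → ℝ)
    (hpos : ∀ n k, 0 < h n k) (hmono : ∀ n, StrictMono (h n))
    (Rmin : (n : Fin N) → Fin (M n) → ℝ) (hR : ∀ n k, 0 ≤ Rmin n k)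
    (Pmask : Fin N → ℝ) (Pmax : ℝ)
    (β : (n : Fin N) → Fin (M n) → ℝ)
    (hβ : ∀ n k, β n k = (2 : ℝ) ^ (Rmin n k / Ws) - 1)
    (Qmin : Fin N → ℝ)
    (hQ : ∀ n, Qmin n = ∑ k, β n k * (1 / h n k +
      ∑ j ∈ univ.filter (fun j => k < j),
        (β n j / h n j) * ∏ l ∈ univ.filter (fun l => k < l ∧ l < j), (1 + β n l))) :
    (∃ p : (n : Fin N) → Fin (M n) → ℝ,
      (∀ n k, 0 ≤ p n k) ∧
      (∀ n k, Rmin n k ≤ Ws * Real.logb 2 (1 + p n k * h n k /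
          (1 + h n k * ∑ j ∈ univ.filter (fun j => k < j), p n j))) ∧
      (∀ n, ∑ k, p n k ≤ Pmask n) ∧
      (∑ n, ∑ k, p n k ≤ Pmax))
    ↔ ((∀ n, Qmin n ≤ Pmask n) ∧ ∑ n, Qmin n ≤ Pmax) :=
  mc_noma_feasibility_iff_general N M Ws hW h hpos Rmin hR Pmask Pmax β hβ Qmin hQ
end

section
/- Monotonicity of minimum cluster power: in a K-user NOMA cluster, any nonnegative power vector satisfying all K minimum-rate constraints has total power at least Q^min, the total power of the unique allocation meeting all constraints with equality; i.e., the allocation with all rates at their minima minimizes total power. -/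
/-!
The rate of user `k` depends only on its own power `p k` and on the interference
`∑_{j > k} p j` from the users above it; it is increasing in the former and decreasing in
the latter. Hence, by downward induction from the strongest user, a feasible `p` dominates
the equality allocation coordinatewise (the strongest user sees no interference, and each
weaker one sees at least as much interference under `p` as under `pstar`), and summing gives
the claim.
-/

open Finset

lemma sinr_nonneg {h q s : ℝ} (hh : 0 ≤ h) (hq : 0 ≤ q) (hs : 0 ≤ s) :
    0 ≤ q * h / (1 + h * s) := by
  positivity

lemma le_of_sinr_le {h q p s t : ℝ} (hh : 0 < h) (hq : 0 ≤ q) (hs : 0 ≤ s) (hst : s ≤ t)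
    (hsinr : q * h / (1 + h * s) ≤ p * h / (1 + h * t)) : q ≤ p := by
  have hden : 0 < 1 + h * s := by positivity
  have hmore_interference : q * h / (1 + h * t) ≤ q * h / (1 + h * s) :=
    div_le_div_of_nonneg_left (by positivity) hden (by gcongr)
  have hsignal : q * h ≤ p * h :=
    (div_le_div_iff_of_pos_right (hden.trans_le (by gcongr))).mp (hmore_interference.trans hsinr)
  exact le_of_mul_le_mul_right hsignal hh

section

variable {K : ℕ} {W : ℝ} {h q p : Fin K → ℝ}

def interferenceAbove (q : Fin K → ℝ) (k : Fin K) : ℝ :=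
  ∑ j ∈ univ.filter (fun j => k < j), q j

lemma interferenceAbove_nonneg (hq : ∀ k, 0 ≤ q k) (k : Fin K) : 0 ≤ interferenceAbove q k :=
  sum_nonneg fun j _ => hq j

lemma sinr_le_of_nomaRate_le (hW : 0 < W) (hh : ∀ k, 0 ≤ h k) (hq : ∀ k, 0 ≤ q k)
    (hp : ∀ k, 0 ≤ p k) {k : Fin K} (hrate : nomaRate W h q k ≤ nomaRate W h p k) :
    q k * h k / (1 + h k * interferenceAbove q k)
      ≤ p k * h k / (1 + h k * interferenceAbove p k) := by
  have hsinr_q := sinr_nonneg (hh k) (hq k) (interferenceAbove_nonneg hq k)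
  have hsinr_p := sinr_nonneg (hh k) (hp k) (interferenceAbove_nonneg hp k)
  rw [nomaRate, nomaRate, ← interferenceAbove, ← interferenceAbove, mul_le_mul_iff_right₀ hW,
    Real.logb_le_logb one_lt_two (by linarith) (by linarith)] at hrate
  linarith

lemma le_of_forall_nomaRate_le (hW : 0 < W) (hh : ∀ k, 0 < h k) (hq : ∀ k, 0 ≤ q k)
    (hp : ∀ k, 0 ≤ p k) (hrate : ∀ k, nomaRate W h q k ≤ nomaRate W h p k) : q ≤ p := by
  intro k
  induction k using WellFoundedGT.induction with
  | _ k ih =>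
    have hinterference : interferenceAbove q k ≤ interferenceAbove p k :=
      sum_le_sum fun j hj => ih j (mem_filter.mp hj).2
    exact le_of_sinr_le (hh k) (hq k) (interferenceAbove_nonneg hq k) hinterference
      (sinr_le_of_nomaRate_le hW (fun j => (hh j).le) hq hp (hrate k))

end

theorem noma_equality_allocation_minimizes_total_power_general
    (K : ℕ) (W : ℝ) (hW : 0 < W)
    (h : Fin K → ℝ) (hpos : ∀ k, 0 < h k)
    (Rmin : Fin K → ℝ)
    (pstar : Fin K → ℝ) (hpstar : ∀ k, 0 ≤ pstar k)
    (hstar : ∀ k, nomaRate W h pstar k = Rmin k)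
    (p : Fin K → ℝ) (hp : ∀ k, 0 ≤ p k)
    (hfeas : ∀ k, Rmin k ≤ nomaRate W h p k) :
    ∑ k, pstar k ≤ ∑ k, p k :=
  sum_le_sum fun k _ =>
    le_of_forall_nomaRate_le hW hpos hpstar hp (fun j => (hstar j).trans_le (hfeas j)) k

/-- Minimum-power monotonicity: any nonnegative power vector satisfying all the minimum-rate
constraints in a `K`-user NOMA cluster uses at least as much total power as the unique
allocation meeting every constraint with equality. -/
theorem noma_equality_allocation_minimizes_total_power
    (K : ℕ) (W : ℝ) (hW : 0 < W)
    (h : Fin K → ℝ) (hpos : ∀ k, 0 < h k) (hmono : StrictMono h)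
    (Rmin : Fin K → ℝ)
    (pstar : Fin K → ℝ) (hpstar : ∀ k, 0 ≤ pstar k)
    (hstar : ∀ k, nomaRate W h pstar k = Rmin k)
    (p : Fin K → ℝ) (hp : ∀ k, 0 ≤ p k)
    (hfeas : ∀ k, Rmin k ≤ nomaRate W h p k) :
    ∑ k, pstar k ≤ ∑ k, p k :=
  noma_equality_allocation_minimizes_total_power_general K W hW h hpos Rmin pstar hpstar hstar p hp
    hfeas
end

section
/- Dinkelbach correspondence: for f1 concave continuous, f2 positive continuous on a nonempty compact convex set P, the maximum of f1/f2 over P equals λ* if and only if max_{p∈P} [f1(p) - λ* f2(p)] = 0; moreover F(λ) = max_{p∈P}[f1(p) - λ f2(p)] is strictly decreasing and has a unique root. -/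
/-!
As a function of `t`, `F t` is the pointwise maximum over the compact set `P` of the affine
functions `t ↦ f₁ p - t * f₂ p`, whose slopes `-f₂ p` are negative; the maximum is attained, so
`F` is convex (hence continuous) and strictly decreasing. Since `f₂ > 0`, the sign of
`f₁ p - t * f₂ p` is the sign of `f₁ p / f₂ p - t`: thus `F t ≤ 0` says that `t` bounds every
ratio from above, and at a root `t` of `F` the maximizers are the points where the ratio
equals `t`.
-/

theorem IsGreatest.isMaxOn_iff {α β : Type*} [PartialOrder β] {f : α → β} {s : Set α} {a : β}
    {p : α} (h : IsGreatest (f '' s) a) (hp : p ∈ s) : IsMaxOn f s p ↔ f p = a := by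
  refine ⟨fun hmax => le_antisymm (h.2 ⟨p, hp, rfl⟩) ?_, fun hpa q hq => ?_⟩
  · obtain ⟨q, hq, rfl⟩ := h.1
    exact hmax hq
  · exact hpa ▸ h.2 ⟨q, hq, rfl⟩

lemma sub_mul_nonpos_iff_div_le {a b t : ℝ} (hb : 0 < b) : a - t * b ≤ 0 ↔ a / b ≤ t := by
  rw [sub_nonpos, div_le_iff₀ hb]

lemma sub_mul_eq_zero_iff_div_eq {a b t : ℝ} (hb : b ≠ 0) : a - t * b = 0 ↔ a / b = t := by
  rw [sub_eq_zero, div_eq_iff hb]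

noncomputable def dinkelbachFn {X : Type*} (P : Set X) (f₁ f₂ : X → ℝ) (t : ℝ) : ℝ :=
  sSup ((fun p => f₁ p - t * f₂ p) '' P)

section Dinkelbach

variable {X : Type*} [TopologicalSpace X] {P : Set X} {f₁ f₂ : X → ℝ}

lemma isGreatest_dinkelbachFn (hP : IsCompact P) (hne : P.Nonempty) (hf₁ : ContinuousOn f₁ P)
    (hf₂ : ContinuousOn f₂ P) (t : ℝ) :
    IsGreatest ((fun p => f₁ p - t * f₂ p) '' P) (dinkelbachFn P f₁ f₂ t) := by
  have hcont : ContinuousOn (fun p => f₁ p - t * f₂ p) P := hf₁.sub (continuousOn_const.mul hf₂)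
  have himage := hP.image_of_continuousOn hcont
  exact ⟨himage.sSup_mem (hne.image _), fun _ hy => le_csSup himage.bddAbove hy⟩

lemma dinkelbachFn_strictAnti (hP : IsCompact P) (hne : P.Nonempty) (hf₁ : ContinuousOn f₁ P)
    (hf₂ : ContinuousOn f₂ P) (hpos : ∀ p ∈ P, 0 < f₂ p) : StrictAnti (dinkelbachFn P f₁ f₂) := by
  intro a b hab
  obtain ⟨p, hp, hpb⟩ := (isGreatest_dinkelbachFn hP hne hf₁ hf₂ b).1
  calc dinkelbachFn P f₁ f₂ b = f₁ p - b * f₂ p := hpb.symm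
    _ < f₁ p - a * f₂ p := sub_lt_sub_left (mul_lt_mul_of_pos_right hab (hpos p hp)) _
    _ ≤ dinkelbachFn P f₁ f₂ a := (isGreatest_dinkelbachFn hP hne hf₁ hf₂ a).2 ⟨p, hp, rfl⟩

lemma dinkelbachFn_convexOn (hP : IsCompact P) (hne : P.Nonempty) (hf₁ : ContinuousOn f₁ P)
    (hf₂ : ContinuousOn f₂ P) : ConvexOn ℝ Set.univ (dinkelbachFn P f₁ f₂) := by
  refine ⟨convex_univ, fun a _ b _ μ ν hμ hν hμν => ?_⟩
  obtain ⟨p, hp, hpF⟩ := (isGreatest_dinkelbachFn hP hne hf₁ hf₂ (μ • a + ν • b)).1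
  have ha := (isGreatest_dinkelbachFn hP hne hf₁ hf₂ a).2 ⟨p, hp, rfl⟩
  have hb := (isGreatest_dinkelbachFn hP hne hf₁ hf₂ b).2 ⟨p, hp, rfl⟩
  rw [← hpF, smul_eq_mul, smul_eq_mul, smul_eq_mul, smul_eq_mul]
  calc f₁ p - (μ * a + ν * b) * f₂ p = μ * (f₁ p - a * f₂ p) + ν * (f₁ p - b * f₂ p) := by
        linear_combination (-f₁ p) * hμν
    _ ≤ μ * dinkelbachFn P f₁ f₂ a + ν * dinkelbachFn P f₁ f₂ b := by gcongr

lemma continuous_dinkelbachFn (hP : IsCompact P) (hne : P.Nonempty) (hf₁ : ContinuousOn f₁ P)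
    (hf₂ : ContinuousOn f₂ P) : Continuous (dinkelbachFn P f₁ f₂) :=
  continuousOn_univ.mp ((dinkelbachFn_convexOn hP hne hf₁ hf₂).continuousOn isOpen_univ)

lemma dinkelbachFn_nonpos_iff (hP : IsCompact P) (hne : P.Nonempty) (hf₁ : ContinuousOn f₁ P)
    (hf₂ : ContinuousOn f₂ P) (hpos : ∀ p ∈ P, 0 < f₂ p) (t : ℝ) :
    dinkelbachFn P f₁ f₂ t ≤ 0 ↔ t ∈ upperBounds ((fun p => f₁ p / f₂ p) '' P) := by
  have hF := isGreatest_dinkelbachFn hP hne hf₁ hf₂ t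
  rw [isLUB_le_iff hF.isLUB, mem_upperBounds, mem_upperBounds, Set.forall_mem_image,
    Set.forall_mem_image]
  exact forall₂_congr fun p hp => sub_mul_nonpos_iff_div_le (hpos p hp)

lemma dinkelbachFn_eq_zero_iff (hP : IsCompact P) (hne : P.Nonempty) (hf₁ : ContinuousOn f₁ P)
    (hf₂ : ContinuousOn f₂ P) (hpos : ∀ p ∈ P, 0 < f₂ p) (t : ℝ) :
    dinkelbachFn P f₁ f₂ t = 0 ↔ IsGreatest ((fun p => f₁ p / f₂ p) '' P) t := by
  have hF := isGreatest_dinkelbachFn hP hne hf₁ hf₂ t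
  have hnonpos := dinkelbachFn_nonpos_iff hP hne hf₁ hf₂ hpos t
  constructor
  · intro h0
    obtain ⟨p, hp, hpF⟩ := hF.1
    have hratio := (sub_mul_eq_zero_iff_div_eq (hpos p hp).ne').1 (hpF.trans h0)
    exact ⟨⟨p, hp, hratio⟩, hnonpos.1 h0.le⟩
  · rintro ⟨⟨p, hp, hratio⟩, hub⟩
    refine le_antisymm (hnonpos.2 hub) ?_
    calc 0 = f₁ p - t * f₂ p := ((sub_mul_eq_zero_iff_div_eq (hpos p hp).ne').2 hratio).symm
      _ ≤ dinkelbachFn P f₁ f₂ t := hF.2 ⟨p, hp, rfl⟩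

lemma isMaxOn_div_iff_isMaxOn_sub_mul (hP : IsCompact P) (hne : P.Nonempty)
    (hf₁ : ContinuousOn f₁ P) (hf₂ : ContinuousOn f₂ P) (hpos : ∀ p ∈ P, 0 < f₂ p) {t : ℝ}
    (ht : dinkelbachFn P f₁ f₂ t = 0) {p : X} (hp : p ∈ P) :
    IsMaxOn (fun x => f₁ x / f₂ x) P p ↔ IsMaxOn (fun x => f₁ x - t * f₂ x) P p := by
  rw [((dinkelbachFn_eq_zero_iff hP hne hf₁ hf₂ hpos t).1 ht).isMaxOn_iff hp,
    (isGreatest_dinkelbachFn hP hne hf₁ hf₂ t).isMaxOn_iff hp, ht,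
    sub_mul_eq_zero_iff_div_eq (hpos p hp).ne']

end Dinkelbach

theorem dinkelbach_correspondence_general
    (d : ℕ) (P : Set (Fin d → ℝ)) (hne : P.Nonempty)
    (hcomp : IsCompact P)
    (f1 f2 : (Fin d → ℝ) → ℝ)
    (hf1 : ContinuousOn f1 P)
    (hf2 : ContinuousOn f2 P) (hf2pos : ∀ p ∈ P, 0 < f2 p)
    (F : ℝ → ℝ)
    (hF : ∀ lam : ℝ, F lam = sSup ((fun p => f1 p - lam * f2 p) '' P)) :
    StrictAnti F ∧ Continuous F ∧ ConvexOn ℝ Set.univ F ∧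
    (∀ lam : ℝ, IsGreatest ((fun p => f1 p / f2 p) '' P) lam ↔ F lam = 0) ∧
    (∀ lam : ℝ, F lam = 0 → ∀ p ∈ P,
      (IsMaxOn (fun x => f1 x / f2 x) P p ↔
        IsMaxOn (fun x => f1 x - lam * f2 x) P p)) := by
  obtain rfl : F = dinkelbachFn P f1 f2 := funext hF
  exact ⟨dinkelbachFn_strictAnti hcomp hne hf1 hf2 hf2pos,
    continuous_dinkelbachFn hcomp hne hf1 hf2, dinkelbachFn_convexOn hcomp hne hf1 hf2,
    fun lam => (dinkelbachFn_eq_zero_iff hcomp hne hf1 hf2 hf2pos lam).symm,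
    fun _ hlam _ hp => isMaxOn_div_iff_isMaxOn_sub_mul hcomp hne hf1 hf2 hf2pos hlam hp⟩

/-- Dinkelbach correspondence: for `f1` concave continuous and `f2` positive continuous on a
nonempty compact convex set `P`, the maximum of `f1 / f2` over `P` equals `lam` iff
`F lam = max_{p ∈ P} (f1 p - lam * f2 p) = 0`; moreover `F` is continuous, convex and
strictly decreasing (hence has a unique root), and `p` maximizes the ratio iff it maximizes
the parametric objective at the root. -/
theorem dinkelbach_correspondence
    (d : ℕ) (P : Set (Fin d → ℝ)) (hne : P.Nonempty)
    (hcomp : IsCompact P) (hconv : Convex ℝ P)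
    (f1 f2 : (Fin d → ℝ) → ℝ)
    (hf1 : ContinuousOn f1 P) (hconc : ConcaveOn ℝ P f1)
    (hf2 : ContinuousOn f2 P) (hf2pos : ∀ p ∈ P, 0 < f2 p)
    (F : ℝ → ℝ)
    (hF : ∀ lam : ℝ, F lam = sSup ((fun p => f1 p - lam * f2 p) '' P)) :
    StrictAnti F ∧ Continuous F ∧ ConvexOn ℝ Set.univ F ∧
    (∀ lam : ℝ, IsGreatest ((fun p => f1 p / f2 p) '' P) lam ↔ F lam = 0) ∧
    (∀ lam : ℝ, F lam = 0 → ∀ p ∈ P,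
      (IsMaxOn (fun x => f1 x / f2 x) P p ↔
        IsMaxOn (fun x => f1 x - lam * f2 x) P p)) :=
  dinkelbach_correspondence_general d P hne hcomp f1 f2 hf1 hf2 hf2pos F hF
end

section
/- Two-user NOMA with maximum-rate cap, closed form: with h1 < h2, minimum rate R1^min for user 1, maximum rate R2^max for user 2, and total budget P, the sum-rate-maximizing powers are p2* = min( (1-β1)P - β1/h1 , M2 ) and p1* = P' - p2*, where β1 = (2^(R1^min/W)-1)/2^(R1^min/W), M2 = (2^(R2^max/W)-1)/h2, and P' is the actual total power used; in particular if (1-β1)P - β1/h1 ≤ M2 then user 1's rate equals exactly R1^min at the optimum. -/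
/-!
Put `t = 2 ^ (R1min / W)` and `q = (1 - β1) P - β1 / h1`, so that `1 + P h1 = t (1 + q h1)`.
User 1's rate constraint says `(1 + (p1 + p2) h1) / (1 + p2 h1) ≥ t`; together with
`p1 + p2 ≤ P` this forces `p2 ≤ q`. The sum rate is `W log₂` of
`(1 + (p1 + p2) h1) (1 + p2 h2) / (1 + p2 h1) ≤ t (1 + q h1) (1 + p2 h2) / (1 + p2 h1)`,
and since `h1 ≤ h2` the ratio `(1 + p2 h2) / (1 + p2 h1)` increases with `p2`, so the sum rate is
at most `W log₂ (t (1 + q h2))`, the value at the closed-form point.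
-/

open Real

lemma mul_logb_two_rpow_div {W : ℝ} (hW : W ≠ 0) (R : ℝ) :
    W * logb 2 ((2 : ℝ) ^ (R / W)) = R := by
  rw [logb_rpow (by norm_num) (by norm_num)]
  field_simp

lemma two_rpow_div_le_of_le_mul_logb {W R x : ℝ} (hW : 0 < W) (hx : 0 < x)
    (h : R ≤ W * logb 2 x) : (2 : ℝ) ^ (R / W) ≤ x := by
  rw [← le_logb_iff_rpow_le (by norm_num) hx, div_le_iff₀ hW]
  linarith

lemma mul_logb_add_mul_logb_le {W x y x' y' : ℝ} (hW : 0 ≤ W) (hx : 0 < x) (hy : 0 < y)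
    (hx' : 0 < x') (hy' : 0 < y') (h : x * y ≤ x' * y') :
    W * logb 2 x + W * logb 2 y ≤ W * logb 2 x' + W * logb 2 y' := by
  rw [← mul_add, ← mul_add, ← logb_mul hx.ne' hy.ne', ← logb_mul hx'.ne' hy'.ne']
  exact mul_le_mul_of_nonneg_left (logb_le_logb_of_le (by norm_num) (by positivity) h) hW

lemma one_add_div_one_add_mul {p1 p2 h : ℝ} (hB : 1 + p2 * h ≠ 0) :
    1 + p1 * h / (1 + p2 * h) = (1 + (p1 + p2) * h) / (1 + p2 * h) := by
  rw [eq_div_iff hB, add_mul, div_mul_cancel₀ _ hB]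
  ring

/-- `(1 + x h2) / (1 + x h1)` is monotone in `x` when `h1 ≤ h2`, written without division. -/
lemma one_add_mul_mul_one_add_mul_le {x y h1 h2 : ℝ} (hxy : x ≤ y) (h12 : h1 ≤ h2) :
    (1 + y * h1) * (1 + x * h2) ≤ (1 + y * h2) * (1 + x * h1) := by
  nlinarith [mul_nonneg (sub_nonneg.2 hxy) (sub_nonneg.2 h12)]

section ClosedForm

variable {t P h1 : ℝ}

lemma one_add_mul_eq_mul_closed_form (ht : t ≠ 0) (hh1 : h1 ≠ 0) :
    1 + P * h1 = t * (1 + ((1 - (t - 1) / t) * P - (t - 1) / t / h1) * h1) := by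
  field_simp
  ring

lemma one_add_sinr_closed_form (ht : t ≠ 0) (hh1 : h1 ≠ 0)
    (hq : 1 + ((1 - (t - 1) / t) * P - (t - 1) / t / h1) * h1 ≠ 0) :
    1 + (t - 1) / t * (P + 1 / h1) * h1 /
      (1 + ((1 - (t - 1) / t) * P - (t - 1) / t / h1) * h1) = t := by
  rw [one_add_div_one_add_mul hq, div_eq_iff hq]
  field_simp
  ring

end ClosedForm

section RateBound

variable {t q P p1 p2 h1 h2 : ℝ}

lemma le_of_rate_constraint (ht : 0 < t) (hh1 : 0 < h1) (hp2 : 0 ≤ p2)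
    (hsum : p1 + p2 ≤ P) (hbudget : 1 + P * h1 = t * (1 + q * h1))
    (hrate : t ≤ 1 + p1 * h1 / (1 + p2 * h1)) : p2 ≤ q := by
  have hB : 0 < 1 + p2 * h1 := by positivity
  rw [one_add_div_one_add_mul hB.ne', le_div_iff₀ hB] at hrate
  have hscaled : t * (1 + p2 * h1) ≤ t * (1 + q * h1) := by nlinarith
  nlinarith [le_of_mul_le_mul_left hscaled ht]

lemma sinr_mul_le_of_rate_constraint (ht : 0 < t) (hh1 : 0 < h1) (h12 : h1 ≤ h2)
    (hp2 : 0 ≤ p2) (hsum : p1 + p2 ≤ P) (hbudget : 1 + P * h1 = t * (1 + q * h1))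
    (hrate : t ≤ 1 + p1 * h1 / (1 + p2 * h1)) :
    (1 + p1 * h1 / (1 + p2 * h1)) * (1 + p2 * h2) ≤ t * (1 + q * h2) := by
  have hB : 0 < 1 + p2 * h1 := by positivity
  have hC : 0 < 1 + p2 * h2 := by have := hh1.trans_le h12; positivity
  have hp2q := le_of_rate_constraint ht hh1 hp2 hsum hbudget hrate
  have hA : 1 + (p1 + p2) * h1 ≤ t * (1 + q * h1) := by nlinarith
  rw [one_add_div_one_add_mul hB.ne', div_mul_eq_mul_div, div_le_iff₀ hB]
  calc (1 + (p1 + p2) * h1) * (1 + p2 * h2)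
      ≤ t * ((1 + q * h1) * (1 + p2 * h2)) := by
        rw [← mul_assoc]; gcongr
    _ ≤ t * ((1 + q * h2) * (1 + p2 * h1)) :=
        mul_le_mul_of_nonneg_left (one_add_mul_mul_one_add_mul_le hp2q h12) ht.le
    _ = t * (1 + q * h2) * (1 + p2 * h1) := by ring

end RateBound

theorem two_user_noma_max_rate_cap_closed_form_general
    (W h1 h2 P R1min : ℝ) (hW : 0 < W) (hh1 : 0 < h1) (h12 : h1 < h2)
    (β1 M2 : ℝ)
    (hβ1 : β1 = ((2 : ℝ) ^ (R1min / W) - 1) / (2 : ℝ) ^ (R1min / W))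
    (hfeas : 0 ≤ (1 - β1) * P - β1 / h1) :
    IsMaxOn
      (fun pp : ℝ × ℝ =>
        W * Real.logb 2 (1 + pp.1 * h1 / (1 + pp.2 * h1)) +
          W * Real.logb 2 (1 + pp.2 * h2))
      {pp : ℝ × ℝ | 0 ≤ pp.1 ∧ 0 ≤ pp.2 ∧ pp.1 + pp.2 ≤ P ∧
        R1min ≤ W * Real.logb 2 (1 + pp.1 * h1 / (1 + pp.2 * h1)) ∧ pp.2 ≤ M2}
      (β1 * (P + 1 / h1), (1 - β1) * P - β1 / h1) ∧
    β1 * (P + 1 / h1) + ((1 - β1) * P - β1 / h1) = P ∧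
    W * Real.logb 2 (1 + (β1 * (P + 1 / h1)) * h1 /
        (1 + ((1 - β1) * P - β1 / h1) * h1)) = R1min := by
  have hh2 : 0 < h2 := hh1.trans h12
  set t := (2 : ℝ) ^ (R1min / W) with ht_def
  have ht : 0 < t := by positivity
  subst hβ1
  have hbudget := one_add_mul_eq_mul_closed_form (P := P) ht.ne' hh1.ne'
  have hsinr := one_add_sinr_closed_form (P := P) ht.ne' hh1.ne' (by positivity)
  set q := (1 - (t - 1) / t) * P - (t - 1) / t / h1
  refine ⟨?_, by ring, by rw [hsinr, ht_def, mul_logb_two_rpow_div hW.ne']⟩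
  rintro ⟨p1, p2⟩ ⟨hp1, hp2, hsum, hrate, -⟩
  have hrate' : t ≤ 1 + p1 * h1 / (1 + p2 * h1) :=
    two_rpow_div_le_of_le_mul_logb hW (by positivity) hrate
  dsimp only
  rw [hsinr]
  exact mul_logb_add_mul_logb_le hW.le (by positivity) (by positivity) ht (by positivity)
    (sinr_mul_le_of_rate_constraint ht hh1 h12.le hp2 hsum hbudget hrate')

/-- Two-user NOMA with a maximum-rate cap on the strong user, closed form: with
`0 < h1 < h2`, `β1 = (2^(R1min/W) - 1)/2^(R1min/W)` and `M2 = (2^(R2max/W) - 1)/h2`, if the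
uncapped optimum `(1 - β1) P - β1/h1` does not exceed `M2` (and is nonnegative), then
`p1 = β1 (P + 1/h1)`, `p2 = (1 - β1) P - β1/h1` maximize the sum-rate over the feasible set,
the full budget `P` is used, and user 1's rate equals `R1min` exactly. -/
theorem two_user_noma_max_rate_cap_closed_form
    (W h1 h2 P R1min R2max : ℝ) (hW : 0 < W) (hh1 : 0 < h1) (h12 : h1 < h2)
    (hR1 : 0 ≤ R1min) (hR2 : 0 ≤ R2max)
    (β1 M2 : ℝ)
    (hβ1 : β1 = ((2 : ℝ) ^ (R1min / W) - 1) / (2 : ℝ) ^ (R1min / W))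
    (hM2 : M2 = ((2 : ℝ) ^ (R2max / W) - 1) / h2)
    (hcase : (1 - β1) * P - β1 / h1 ≤ M2)
    (hfeas : 0 ≤ (1 - β1) * P - β1 / h1) :
    IsMaxOn
      (fun pp : ℝ × ℝ =>
        W * Real.logb 2 (1 + pp.1 * h1 / (1 + pp.2 * h1)) +
          W * Real.logb 2 (1 + pp.2 * h2))
      {pp : ℝ × ℝ | 0 ≤ pp.1 ∧ 0 ≤ pp.2 ∧ pp.1 + pp.2 ≤ P ∧
        R1min ≤ W * Real.logb 2 (1 + pp.1 * h1 / (1 + pp.2 * h1)) ∧ pp.2 ≤ M2}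
      (β1 * (P + 1 / h1), (1 - β1) * P - β1 / h1) ∧
    β1 * (P + 1 / h1) + ((1 - β1) * P - β1 / h1) = P ∧
    W * Real.logb 2 (1 + (β1 * (P + 1 / h1)) * h1 /
        (1 + ((1 - β1) * P - β1 / h1) * h1)) = R1min :=
  two_user_noma_max_rate_cap_closed_form_general W h1 h2 P R1min hW hh1 h12 β1 M2 hβ1 hfeas
end
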